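/- arXiv:math/0611060 — 6 statements merged into one kernel-verified Lean document; each statement's English description precedes it below -/
import Mathlib

section
/- Let M be a module over the disk algebra, i.e. a complex vector subspace of the continuous complex-valued functions on the closed unit disk Δ = {z ∈ ℂ : |z| ≤ 1} that contains the constant function 1 and satisfies a·f ∈ M whenever a is in the disk algebra and f ∈ M. Assume the maximum principle holds for M: for every f ∈ M and every z₀ in the open unit disk, |f(z₀)| ≤ sup_{|z|=1} |f(z)|. Then every function in M is holomorphic on the open unit disk {z ∈ ℂ : |z| < 1}. -/
/-!
Fix `z₀` in the open disk. By the maximum principle, `F|_Γ ↦ F z₀` is a well-defined functional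
of norm at most one on the restrictions of `M` to the circle; a Hahn–Banach extension `Λ` to
`C(Γ, ℂ)` still has norm at most one and `Λ 1 = 1`, so it commutes with complex conjugation.
By Stone–Weierstrass, `f` is uniformly within `ε` on `Γ` of some `P + conj (z Q)` with polynomials
`P, Q`. Since `M` contains the polynomials and `z f`, applying `Λ` to `f - (P + conj (z Q))` and to
`z f - (z P + conj Q)` gives `|f z₀ - P z₀| ≤ 3 ε / (1 - |z₀|²)`. As `P` does not depend on `z₀`,
`f` is a locally uniform limit of polynomials on the open disk, hence holomorphic.
-/

open Metric Polynomial ComplexConjugate Filter Topology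

lemma conj_pow_mul_pow_of_norm_eq_one {x : ℂ} (hx : ‖x‖ = 1) (n : ℕ) :
    conj x ^ n * x ^ n = 1 := by
  simp [← mul_pow, Complex.conj_mul', hx]

lemma conj_eval_eq_conj_pow_mul_eval_reflect {x : ℂ} (hx : ‖x‖ = 1) {R : ℂ[X]} {d : ℕ}
    (hd : R.natDegree ≤ d) :
    conj (R.eval x) = conj x ^ d * ((reflect d R).map (starRingEnd ℂ)).eval x := by
  have hx0 : conj x ≠ 0 := by simp [← norm_pos_iff, hx]
  let _ : Invertible (conj x) := invertibleOfNonzero hx0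
  have hinv : ⅟(conj x) = x := by rw [invOf_eq_inv, ← Complex.inv_eq_conj hx, inv_inv]
  have := eval₂_reflect_mul_pow (starRingEnd ℂ) (conj x) d R hd
  rw [hinv, eval₂_hom] at this
  rw [← this, eval_map, mul_comm]

lemma exists_eval_add_conj_eq_conj_pow_mul_eval (N : ℕ) (R : ℂ[X]) :
    ∃ P Q : ℂ[X], ∀ x : ℂ, ‖x‖ = 1 →
      conj x ^ N * R.eval x = P.eval x + conj (x * Q.eval x) := by
  -- `P` is the quotient of `R` by `X ^ N`; on the circle, `conj x ^ N` times the remainder is the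
  -- conjugate of a polynomial vanishing at `0`.
  set B := R %ₘ X ^ N
  have hB : B.degree < N := by
    simpa using degree_modByMonic_lt R (monic_X_pow N)
  set S := (reflect N B).map (starRingEnd ℂ)
  have hS : X * divX S = S := by
    have : S.coeff 0 = 0 := by
      simp [S, coeff_reflect, coeff_eq_zero_of_degree_lt hB]
    simpa [this] using X_mul_divX_add S
  refine ⟨R /ₘ X ^ N, divX S, fun x hx => ?_⟩
  have hxN := conj_pow_mul_pow_of_norm_eq_one hx N
  have hBx : B.eval x = x ^ N * conj (S.eval x) := by
    simpa using congrArg conj <|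
      conj_eval_eq_conj_pow_mul_eval_reflect hx (natDegree_le_of_degree_le hB.le)
  have hQ : x * (divX S).eval x = S.eval x := by simpa using congrArg (eval x) hS
  rw [hQ]
  conv_lhs => rw [← modByMonic_add_div R (X ^ N)]
  rw [eval_add, eval_mul, eval_pow, eval_X, hBx]
  linear_combination (eval x (R /ₘ X ^ N) + conj (eval x S)) * hxN

lemma exists_conj_pow_mul_eval_of_mem_starClosure {g : C(sphere (0 : ℂ) 1, ℂ)}
    (hg : g ∈ (polynomialFunctions (sphere (0 : ℂ) 1)).starClosure) :
    ∃ (N : ℕ) (R : ℂ[X]), ∀ x : sphere (0 : ℂ) 1, g x = conj (x : ℂ) ^ N * R.eval (x : ℂ) := by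
  rw [polynomialFunctions.starClosure_eq_adjoin_X] at hg
  induction hg using StarAlgebra.adjoin_induction with
  | mem p hp =>
    rw [Set.mem_singleton_iff] at hp
    exact ⟨0, X, fun x => by simp [hp]⟩
  | algebraMap c => exact ⟨0, C c, fun x => by simp⟩
  | add p q _ _ ihp ihq =>
    obtain ⟨N₁, R₁, h₁⟩ := ihp
    obtain ⟨N₂, R₂, h₂⟩ := ihq
    refine ⟨N₁ + N₂, X ^ N₂ * R₁ + X ^ N₁ * R₂, fun x => ?_⟩
    have hx₁ := conj_pow_mul_pow_of_norm_eq_one (norm_eq_of_mem_sphere x) N₁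
    have hx₂ := conj_pow_mul_pow_of_norm_eq_one (norm_eq_of_mem_sphere x) N₂
    simp only [ContinuousMap.add_apply, h₁, h₂, eval_add, eval_mul, eval_pow, eval_X]
    linear_combination (-conj (x : ℂ) ^ N₁ * R₁.eval (x : ℂ)) * hx₂
      - conj (x : ℂ) ^ N₂ * R₂.eval (x : ℂ) * hx₁
  | mul p q _ _ ihp ihq =>
    obtain ⟨N₁, R₁, h₁⟩ := ihp
    obtain ⟨N₂, R₂, h₂⟩ := ihq
    refine ⟨N₁ + N₂, R₁ * R₂, fun x => ?_⟩
    simp only [ContinuousMap.mul_apply, h₁, h₂, eval_mul]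
    ring
  | star p _ ih =>
    obtain ⟨N, R, h⟩ := ih
    refine ⟨R.natDegree, X ^ N * (reflect R.natDegree R).map (starRingEnd ℂ), fun x => ?_⟩
    rw [ContinuousMap.star_apply, h, Complex.star_def, map_mul, map_pow, Complex.conj_conj,
      conj_eval_eq_conj_pow_mul_eval_reflect (norm_eq_of_mem_sphere x) le_rfl]
    simp only [eval_mul, eval_pow, eval_X]
    ring

lemma exists_norm_sub_eval_add_conj_lt (u : C(sphere (0 : ℂ) 1, ℂ)) {ε : ℝ} (hε : 0 < ε) :
    ∃ P Q : ℂ[X], ∀ x : sphere (0 : ℂ) 1,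
      ‖u x - (P.eval (x : ℂ) + conj ((x : ℂ) * Q.eval (x : ℂ)))‖ < ε := by
  have hu : u ∈ closure ((polynomialFunctions (sphere (0 : ℂ) 1)).starClosure : Set _) := by
    rw [← StarSubalgebra.topologicalClosure_coe,
      polynomialFunctions.starClosure_topologicalClosure]
    trivial
  obtain ⟨g, hg, hug⟩ := Metric.mem_closure_iff.mp hu ε hε
  obtain ⟨N, R, hNR⟩ := exists_conj_pow_mul_eval_of_mem_starClosure hg
  obtain ⟨P, Q, hPQ⟩ := exists_eval_add_conj_eq_conj_pow_mul_eval N R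
  refine ⟨P, Q, fun x => ?_⟩
  rw [← hPQ _ (norm_eq_of_mem_sphere x), ← hNR, ← dist_eq_norm]
  exact (ContinuousMap.dist_apply_le_dist x).trans_lt hug

lemma sq_norm_add_ofReal_mul_I (w : ℂ) (t : ℝ) :
    ‖w + t * Complex.I‖ ^ 2 = w.re ^ 2 + (w.im + t) ^ 2 := by
  rw [Complex.sq_norm, Complex.normSq_apply]
  simp only [Complex.add_re, Complex.mul_re, Complex.ofReal_re, Complex.I_re, mul_zero,
    Complex.ofReal_im, Complex.I_im, mul_one, sub_self, add_zero, Complex.add_im, Complex.mul_im]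
  ring

section NormOneFunctional

variable {X : Type*} [TopologicalSpace X] [CompactSpace X] {Λ : C(X, ℂ) →L[ℂ] ℂ}

lemma im_map_eq_zero_of_norm_le_one (hΛ : ‖Λ‖ ≤ 1) (h1 : Λ 1 = 1) {g : C(X, ℂ)}
    (hg : ∀ x, (g x).im = 0) : (Λ g).im = 0 := by
  -- Shifting `g` by `i t` shifts `Λ g` by `i t` but its norm only grows like `√(‖g‖² + t²)`.
  have hlin : ∀ t : ℝ, (Λ g).im ^ 2 + 2 * (Λ g).im * t ≤ ‖g‖ ^ 2 := by
    intro t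
    have hshift : ‖g + (t * Complex.I) • 1‖ ≤ √(‖g‖ ^ 2 + t ^ 2) := by
      refine (ContinuousMap.norm_le _ (Real.sqrt_nonneg _)).mpr fun x => ?_
      refine Real.le_sqrt_of_sq_le ?_
      have hgx : ‖g x‖ ^ 2 ≤ ‖g‖ ^ 2 := by gcongr; exact g.norm_coe_le_norm x
      have hgx' := sq_norm_add_ofReal_mul_I (g x) 0
      have hgt := sq_norm_add_ofReal_mul_I (g x) t
      simp only [Complex.ofReal_zero, zero_mul, add_zero, hg x] at hgx' hgt
      simp only [ContinuousMap.add_apply, ContinuousMap.smul_apply, ContinuousMap.one_apply,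
        smul_eq_mul, mul_one, hgt]
      nlinarith
    have hbound : ‖Λ g + t * Complex.I‖ ≤ √(‖g‖ ^ 2 + t ^ 2) := by
      rw [← mul_one (t * Complex.I : ℂ), ← h1, ← smul_eq_mul, ← map_smul, ← map_add]
      exact (Λ.le_of_opNorm_le hΛ _).trans (by simpa using hshift)
    have hsq := (sq_le_sq₀ (norm_nonneg _) (Real.sqrt_nonneg _)).mpr hbound
    rw [Real.sq_sqrt (by positivity), sq_norm_add_ofReal_mul_I] at hsq
    nlinarith [sq_nonneg (Λ g).re]
  by_contra hne
  have := hlin (‖g‖ ^ 2 / (2 * (Λ g).im))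
  rw [mul_div_cancel₀ _ (by positivity)] at this
  nlinarith [sq_pos_of_ne_zero hne]

lemma map_star_of_norm_le_one (hΛ : ‖Λ‖ ≤ 1) (h1 : Λ 1 = 1) (g : C(X, ℂ)) :
    Λ (star g) = conj (Λ g) := by
  have hre : (Λ (g + star g)).im = 0 :=
    im_map_eq_zero_of_norm_le_one hΛ h1 fun x => by simp
  have him : (Λ (Complex.I • (star g - g))).im = 0 :=
    im_map_eq_zero_of_norm_le_one hΛ h1 fun x => by simp
  rw [map_add, Complex.add_im] at hre
  rw [map_smul, map_sub, smul_eq_mul] at him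
  apply Complex.ext
  · simp only [Complex.mul_im, Complex.I_re, Complex.sub_im, zero_mul, Complex.I_im,
      Complex.sub_re, one_mul, zero_add, Complex.conj_re] at him ⊢
    linarith
  · rw [Complex.conj_im]
    linarith

end NormOneFunctional

lemma LinearMap.exists_strongDual_comp_eq_of_norm_le {𝕜 V E : Type*} [RCLike 𝕜] [AddCommGroup V]
    [Module 𝕜 V] [NormedAddCommGroup E] [NormedSpace 𝕜 E] (ρ : V →ₗ[𝕜] E) (ℓ : V →ₗ[𝕜] 𝕜)
    (h : ∀ v, ‖ℓ v‖ ≤ ‖ρ v‖) : ∃ Λ : StrongDual 𝕜 E, ‖Λ‖ ≤ 1 ∧ ∀ v, Λ (ρ v) = ℓ v := by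
  have hker : LinearMap.ker ρ ≤ LinearMap.ker ℓ := fun v hv =>
    norm_le_zero_iff.mp ((h v).trans_eq (by rw [LinearMap.mem_ker.mp hv, norm_zero]))
  let φ : LinearMap.range ρ →ₗ[𝕜] 𝕜 := (LinearMap.ker ρ).liftQ ℓ hker ∘ₗ ρ.quotKerEquivRange.symm
  have hφ : ∀ v, φ ⟨ρ v, LinearMap.mem_range_self ρ v⟩ = ℓ v := fun v => by
    simp [φ, LinearMap.quotKerEquivRange_symm_apply_image]
  have hφle : ∀ y, ‖φ y‖ ≤ 1 * ‖y‖ := by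
    rintro ⟨_, v, rfl⟩
    simpa [hφ] using h v
  obtain ⟨Λ, hΛφ, hΛ⟩ := exists_extension_norm_eq _ (φ.mkContinuous 1 hφle)
  refine ⟨Λ, hΛ ▸ LinearMap.mkContinuous_norm_le _ zero_le_one hφle, fun v => ?_⟩
  simpa [hφ] using hΛφ ⟨ρ v, LinearMap.mem_range_self ρ v⟩

lemma Submodule.exists_representing_functional {X 𝕜 : Type*} [TopologicalSpace X] [RCLike 𝕜]
    (K : Set X) [CompactSpace K] (M : Submodule 𝕜 (X → 𝕜)) (hcont : ∀ f ∈ M, ContinuousOn f K)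
    (x₀ : X) (hmax : ∀ f ∈ M, ‖f x₀‖ ≤ sSup ((fun x => ‖f x‖) '' K)) :
    ∃ Λ : StrongDual 𝕜 C(K, 𝕜), ‖Λ‖ ≤ 1 ∧
      ∀ f ∈ M, ∀ g : C(K, 𝕜), (∀ x : K, g x = f x) → Λ g = f x₀ := by
  let ρ : M →ₗ[𝕜] C(K, 𝕜) :=
    { toFun f := ⟨K.domRestrict (f : X → 𝕜), (hcont f f.2).domRestrict⟩
      map_add' _ _ := rfl
      map_smul' _ _ := rfl }
  let ℓ : M →ₗ[𝕜] 𝕜 := (LinearMap.proj x₀).comp M.subtype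
  have hle : ∀ f, ‖ℓ f‖ ≤ ‖ρ f‖ := fun f =>
    (hmax f f.2).trans <| Real.sSup_le (by
      rintro _ ⟨x, hx, rfl⟩
      exact (ρ f).norm_coe_le_norm ⟨x, hx⟩) (norm_nonneg _)
  obtain ⟨Λ, hΛ, hΛρ⟩ := LinearMap.exists_strongDual_comp_eq_of_norm_le ρ ℓ hle
  refine ⟨Λ, hΛ, fun f hf g hg => ?_⟩
  have : g = ρ ⟨f, hf⟩ := ContinuousMap.ext hg
  rw [this, hΛρ]
  rfl

lemma norm_sub_le_of_norm_sub_add_conj_le {z a p q : ℂ} {ε : ℝ} (hz : ‖z‖ < 1)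
    (h₁ : ‖a - (p + conj (z * q))‖ ≤ ε) (h₂ : ‖z * a - (z * p + conj q)‖ ≤ ε) :
    ‖a - p‖ ≤ 3 * ε / (1 - ‖z‖ ^ 2) := by
  have hε : 0 ≤ ε := (norm_nonneg _).trans h₁
  have hpos : 0 < 1 - ‖z‖ ^ 2 := by nlinarith [norm_nonneg z]
  have hq : (1 - ‖z‖ ^ 2) * ‖q‖ ≤ 2 * ε := by
    have hiso : z * (a - (p + conj (z * q))) - (z * a - (z * p + conj q))
        = ((1 - ‖z‖ ^ 2 : ℝ) : ℂ) * conj q := by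
      push_cast
      rw [map_mul, ← Complex.mul_conj']
      ring
    have hle : ‖z * (a - (p + conj (z * q))) - (z * a - (z * p + conj q))‖ ≤ ‖z‖ * ε + ε :=
      (norm_sub_le _ _).trans <| add_le_add
        ((norm_mul_le _ _).trans (mul_le_mul_of_nonneg_left h₁ (norm_nonneg z))) h₂
    rw [hiso, norm_mul, Complex.norm_real, Real.norm_of_nonneg hpos.le, Complex.norm_conj] at hle
    nlinarith
  have hap : ‖a - p‖ ≤ ε + ‖q‖ :=
    calc ‖a - p‖ = ‖(a - (p + conj (z * q))) + conj (z * q)‖ := by ring_nf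
      _ ≤ ε + ‖z‖ * ‖q‖ := by
          refine (norm_add_le _ _).trans (add_le_add h₁ ?_)
          rw [Complex.norm_conj, norm_mul]
      _ ≤ ε + ‖q‖ := by nlinarith [norm_nonneg q]
  rw [le_div_iff₀ hpos]
  nlinarith [norm_nonneg z]

lemma norm_map_sub_eval_le_of_approx {Λ : StrongDual ℂ C(sphere (0 : ℂ) 1, ℂ)} (hΛ : ‖Λ‖ ≤ 1)
    {z₀ : ℂ} (hz₀ : ‖z₀‖ < 1) (hpoly : ∀ p : ℂ[X], Λ (p.toContinuousMapOn _) = p.eval z₀)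
    {u : C(sphere (0 : ℂ) 1, ℂ)} (hu : Λ ((X : ℂ[X]).toContinuousMapOn _ * u) = z₀ * Λ u)
    {P Q : ℂ[X]} {ε : ℝ}
    (hε : ∀ x : sphere (0 : ℂ) 1, ‖u x - (P.eval (x : ℂ) + conj ((x : ℂ) * Q.eval (x : ℂ)))‖ ≤ ε) :
    ‖Λ u - P.eval z₀‖ ≤ 3 * ε / (1 - ‖z₀‖ ^ 2) := by
  have h1 : Λ 1 = 1 := by
    simpa only [← toContinuousMapOnAlgHom_apply, map_one, eval_one] using hpoly 1
  have hstar (q : ℂ[X]) : Λ (star (q.toContinuousMapOn _)) = conj (q.eval z₀) := by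
    rw [map_star_of_norm_le_one hΛ h1, hpoly]
  have hε0 : 0 ≤ ε := (norm_nonneg _).trans (hε ⟨1, by simp⟩)
  have hΛle (w : C(sphere (0 : ℂ) 1, ℂ)) (hw : ∀ x, ‖w x‖ ≤ ε) : ‖Λ w‖ ≤ ε :=
    (Λ.le_of_opNorm_le hΛ w).trans (by rw [one_mul]; exact (ContinuousMap.norm_le _ hε0).mpr hw)
  refine norm_sub_le_of_norm_sub_add_conj_le (q := Q.eval z₀) hz₀ ?_ ?_
  · have := hΛle (u - (P.toContinuousMapOn _ + star ((X * Q).toContinuousMapOn _))) fun x => by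
      simpa using hε x
    simpa [hpoly, hstar] using this
  · have := hΛle ((X : ℂ[X]).toContinuousMapOn _ * u
        - ((X * P).toContinuousMapOn _ + star (Q.toContinuousMapOn _))) fun x => by
      have hx : ‖(x : ℂ)‖ = 1 := norm_eq_of_mem_sphere x
      have hxx : conj (x : ℂ) * x = 1 := by simpa using conj_pow_mul_pow_of_norm_eq_one hx 1
      have hmul : (x : ℂ) * u x - ((x : ℂ) * P.eval (x : ℂ) + conj (Q.eval (x : ℂ)))
          = x * (u x - (P.eval (x : ℂ) + conj ((x : ℂ) * Q.eval (x : ℂ)))) := by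
        rw [map_mul]; linear_combination conj (Q.eval (x : ℂ)) * hxx
      simpa [hmul, hx] using hε x
    simpa [hpoly, hstar, hu] using this

lemma differentiableOn_of_forall_exists_dist_le {f : ℂ → ℂ} {U : Set ℂ} (hU : IsOpen U)
    (h : ∀ ε > 0, ∃ g : ℂ → ℂ, DifferentiableOn ℂ g U ∧ ∀ z ∈ U, dist (f z) (g z) ≤ ε) :
    DifferentiableOn ℂ f U := by
  choose! g hgd hg using h
  have hlim : TendstoUniformlyOn g f (𝓝[>] 0) U :=
    Metric.tendstoUniformlyOn_iff.mpr fun δ hδ => by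
      filter_upwards [Ioo_mem_nhdsGT hδ] with ε hε z hz
      exact (hg ε hε.1 z hz).trans_lt hε.2
  exact hlim.tendstoLocallyUniformlyOn.differentiableOn
    (eventually_nhdsWithin_of_forall hgd) hU

lemma differentiableOn_ball_of_forall_exists_polynomial {f : ℂ → ℂ}
    (h : ∀ ε > 0, ∃ p : ℂ[X], ∀ z ∈ ball (0 : ℂ) 1, ‖f z - p.eval z‖ ≤ ε / (1 - ‖z‖ ^ 2)) :
    DifferentiableOn ℂ f (ball 0 1) := by
  intro z₀ hz₀
  rw [mem_ball_zero_iff] at hz₀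
  obtain ⟨r, hz₀r, hr⟩ := exists_between hz₀
  have hr₀ : 0 < 1 - r ^ 2 := by nlinarith [norm_nonneg z₀]
  have hdiff : DifferentiableOn ℂ f (ball 0 r) := by
    refine differentiableOn_of_forall_exists_dist_le isOpen_ball fun ε hε => ?_
    obtain ⟨p, hp⟩ := h (ε * (1 - r ^ 2)) (by positivity)
    refine ⟨fun z => p.eval z, p.differentiable.differentiableOn, fun z hz => ?_⟩
    rw [mem_ball_zero_iff] at hz
    have hz₁ : 0 < 1 - ‖z‖ ^ 2 := by nlinarith [norm_nonneg z]
    calc dist (f z) (p.eval z) ≤ ε * (1 - r ^ 2) / (1 - ‖z‖ ^ 2) :=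
          (dist_eq_norm _ _).trans_le (hp z (mem_ball_zero_iff.mpr (hz.trans hr)))
      _ ≤ ε := by rw [div_le_iff₀ hz₁]; gcongr
  exact (hdiff.differentiableAt (isOpen_ball.mem_nhds (mem_ball_zero_iff.mpr hz₀r)))
    |>.differentiableWithinAt

/-- Rudin's theorem: a module over the disk algebra satisfying the maximum
principle consists of holomorphic functions. -/
theorem rudin_module_holomorphic
    (M : Set (ℂ → ℂ))
    (hMcont : ∀ f ∈ M, ContinuousOn f (Metric.closedBall (0 : ℂ) 1))
    (hone : (fun _ : ℂ => (1 : ℂ)) ∈ M)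
    (hadd : ∀ f ∈ M, ∀ g ∈ M, f + g ∈ M)
    (hsmul : ∀ (c : ℂ), ∀ f ∈ M, c • f ∈ M)
    (hmod : ∀ a : ℂ → ℂ,
      ContinuousOn a (Metric.closedBall (0 : ℂ) 1) →
      DifferentiableOn ℂ a (Metric.ball (0 : ℂ) 1) →
      ∀ f ∈ M, a * f ∈ M)
    (hmax : ∀ f ∈ M, ∀ z₀ ∈ Metric.ball (0 : ℂ) 1,
      ‖f z₀‖ ≤
        sSup ((fun z => ‖f z‖) '' Metric.sphere (0 : ℂ) 1)) :
    ∀ f ∈ M, DifferentiableOn ℂ f (Metric.ball (0 : ℂ) 1) := by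
  intro f hf
  let V : Submodule ℂ (ℂ → ℂ) :=
    { carrier := M
      add_mem' := fun hg hh => hadd _ hg _ hh
      zero_mem' := by simpa using hsmul 0 _ hone
      smul_mem' := hsmul }
  have hcont : ∀ g ∈ M, ContinuousOn g (sphere 0 1) := fun g hg =>
    (hMcont g hg).mono sphere_subset_closedBall
  have hpoly (p : ℂ[X]) : (fun z => p.eval z) ∈ M := by
    have := hmod _ p.continuous.continuousOn p.differentiable.differentiableOn _ hone
    rwa [← Pi.one_def, mul_one] at this
  have hzf : (fun z => z * f z) ∈ M := hmod _ continuousOn_id differentiableOn_id f hf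
  let u : C(sphere (0 : ℂ) 1, ℂ) := ⟨(sphere 0 1).domRestrict f, (hcont f hf).domRestrict⟩
  refine differentiableOn_ball_of_forall_exists_polynomial fun ε hε => ?_
  obtain ⟨P, Q, hPQ⟩ := exists_norm_sub_eval_add_conj_lt u (by positivity : 0 < ε / 3)
  refine ⟨P, fun z₀ hz₀ => ?_⟩
  obtain ⟨Λ, hΛ, hΛM⟩ := V.exists_representing_functional _ hcont z₀ fun g hg => hmax g hg z₀ hz₀
  have hΛu : Λ u = f z₀ := hΛM f hf u fun _ => rfl
  have := norm_map_sub_eval_le_of_approx hΛ (mem_ball_zero_iff.mp hz₀)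
    (fun p => hΛM _ (hpoly p) _ fun _ => rfl)
    (by rw [hΛu]; exact hΛM _ hzf _ fun x => by simp [u]) fun x => (hPQ x).le
  rwa [hΛu, mul_div_cancel₀ _ three_ne_zero] at this
end

section
/- Let φ : ℂ → ℂ be continuous on the punctured closed unit disk Δ \ {0}, holomorphic on the punctured open unit disk {z : 0 < |z| < 1}, and suppose φ has either a pole or a removable singularity at 0, i.e. there exists k ∈ ℕ such that z ↦ z^k·φ(z) extends holomorphically across 0. Let γ = {(ζ, φ(ζ)) : |ζ| = 1} and Σ = {(ζ, φ(ζ)) : 0 < |ζ| ≤ 1} in ℂ². Then Σ is contained in the projective hull of γ. -/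
/-- The projective hull of a compact set X ⊆ ℂ²: points x such that for some
constant C ≥ 0, |P(x)| ≤ C^d · sup_X |P| for every polynomial P of total degree ≤ d. -/
def projectiveHull (X : Set (ℂ × ℂ)) : Set (ℂ × ℂ) :=
  {x | ∃ C : ℝ, 0 ≤ C ∧ ∀ (d : ℕ) (P : MvPolynomial (Fin 2) ℂ), P.totalDegree ≤ d →
    ‖MvPolynomial.eval ![x.1, x.2] P‖ ≤
      C ^ d * sSup ((fun y : ℂ × ℂ => ‖MvPolynomial.eval ![y.1, y.2] P‖) '' X)}

/-! For `P` of total degree at most `d`, the function `z ^ (k * d) * P(z, φ z)` equals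
`∑ₘ cₘ z ^ (m₀ + k (d - m₁)) (z ^ k φ z) ^ m₁`, so it extends holomorphically across `0`; on the
unit circle its modulus is `|P(z, φ z)|`. The maximum principle gives
`|P(ζ, φ ζ)| ≤ |ζ| ^ (-k d) · sup_γ |P|`, so `C = |ζ| ^ (-k)` witnesses `(ζ, φ ζ) ∈ γ̂`. -/

open Metric Set MvPolynomial Filter Topology

attribute [local fun_prop] MvPolynomial.continuous_eval

theorem MvPolynomial.pow_mul_eval_eq_sum {R : Type*} [CommRing R] {P : MvPolynomial (Fin 2) R}
    {d : ℕ} (hP : P.totalDegree ≤ d) (k : ℕ) (z w : R) :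
    z ^ (k * d) * eval ![z, w] P =
      ∑ m ∈ P.support, coeff m P * z ^ (m 0 + k * (d - m 1)) * (z ^ k * w) ^ m 1 := by
  rw [eval_eq', Finset.mul_sum]
  refine Finset.sum_congr rfl fun m hm => ?_
  have hm1 : m 1 ≤ d := (Finsupp.le_degree 1 m).trans ((le_totalDegree hm).trans hP)
  obtain ⟨e, rfl⟩ := Nat.exists_eq_add_of_le hm1
  simp only [Fin.prod_univ_two, Matrix.cons_val_zero, Matrix.cons_val_one,
    Nat.add_sub_cancel_left]
  ring

theorem exists_differentiableOn_eqOn_pow_mul_eval {φ g : ℂ → ℂ} {U s : Set ℂ} {k : ℕ}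
    (hg : DifferentiableOn ℂ g U) (hgφ : ∀ z ∈ s, g z = z ^ k * φ z)
    {P : MvPolynomial (Fin 2) ℂ} {d : ℕ} (hP : P.totalDegree ≤ d) :
    ∃ G : ℂ → ℂ, DifferentiableOn ℂ G U ∧
      EqOn G (fun z => z ^ (k * d) * eval ![z, φ z] P) s := by
  refine ⟨fun z => ∑ m ∈ P.support, coeff m P * z ^ (m 0 + k * (d - m 1)) * g z ^ m 1,
    ?_, fun z hz => ?_⟩
  · fun_prop
  · simp only [pow_mul_eval_eq_sum hP, hgφ z hz]

theorem norm_le_of_forall_mem_sphere_norm_le_of_eqOn {f G : ℂ → ℂ} {c : ℂ} {R M : ℝ}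
    (hR : 0 < R) (hf : ContinuousOn f (closedBall c R \ {c}))
    (hG : DifferentiableOn ℂ G (ball c R)) (hGf : EqOn G f (ball c R \ {c}))
    (hM : ∀ z ∈ sphere c R, ‖f z‖ ≤ M) {z : ℂ} (hz : z ∈ closedBall c R \ {c}) :
    ‖f z‖ ≤ M := by
  set F := Function.update f c (G c)
  have hFG : EqOn F G (ball c R) := fun w hw => by
    rcases eq_or_ne w c with rfl | hwc
    · simp [F]
    · simp [F, hwc, hGf ⟨hw, hwc⟩]
  have hFf : EqOn F f {c}ᶜ := fun w hw => Function.update_of_ne hw _ _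
  have hF : DiffContOnCl ℂ F (ball c R) := by
    refine ⟨hG.congr hFG, ?_⟩
    rw [closure_ball c hR.ne']
    intro w hw
    rcases eq_or_ne w c with rfl | hwc
    · exact ((hG.continuousOn.continuousAt (ball_mem_nhds w hR)).congr_of_eventuallyEq
        (hFG.eventuallyEq_of_mem (ball_mem_nhds w hR))).continuousWithinAt
    · have hFf_near : F =ᶠ[𝓝[closedBall c R] w] f :=
        hFf.eventuallyEq_of_mem (mem_nhdsWithin_of_mem_nhds (isOpen_compl_singleton.mem_nhds hwc))
      exact (continuousWithinAt_sdiff_singleton.mp (hf w ⟨hw, hwc⟩)).congr_of_eventuallyEq_of_mem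
        hFf_near hw
  have hFM : ∀ w ∈ frontier (ball c R), ‖F w‖ ≤ M := by
    rw [frontier_ball c hR.ne']
    intro w hw
    rw [hFf (ne_of_mem_sphere hw hR.ne')]
    exact hM w hw
  have := Complex.norm_le_of_forall_mem_frontier_norm_le isBounded_ball hF hFM
    (closure_ball c hR.ne' ▸ hz.1)
  rwa [hFf hz.2] at this

theorem norm_eval_le_sSup_of_isCompact {X : Set (ℂ × ℂ)} (hX : IsCompact X)
    (P : MvPolynomial (Fin 2) ℂ) {y : ℂ × ℂ} (hy : y ∈ X) :
    ‖eval ![y.1, y.2] P‖ ≤ sSup ((fun y : ℂ × ℂ => ‖eval ![y.1, y.2] P‖) '' X) :=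
  le_csSup (hX.bddAbove_image (by fun_prop)) (mem_image_of_mem _ hy)

theorem graph_subset_projectiveHull_general
    (φ : ℂ → ℂ)
    (hcont : ContinuousOn φ (Metric.closedBall (0 : ℂ) 1 \ {0}))
    (hpole : ∃ (k : ℕ) (g : ℂ → ℂ), DifferentiableOn ℂ g (Metric.ball (0 : ℂ) 1) ∧
      ∀ z ∈ Metric.ball (0 : ℂ) 1 \ {0}, g z = z ^ k * φ z) :
    (fun ζ => (ζ, φ ζ)) '' (Metric.closedBall (0 : ℂ) 1 \ {0}) ⊆
      projectiveHull ((fun ζ => (ζ, φ ζ)) '' Metric.sphere (0 : ℂ) 1) := by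
  obtain ⟨k, g, hg, hgφ⟩ := hpole
  have hsphere : sphere (0 : ℂ) 1 ⊆ closedBall 0 1 \ {0} := fun z hz =>
    ⟨sphere_subset_closedBall hz, ne_of_mem_sphere hz one_ne_zero⟩
  have hγ : IsCompact ((fun ζ => (ζ, φ ζ)) '' sphere (0 : ℂ) 1) :=
    (isCompact_sphere 0 1).image_of_continuousOn (continuousOn_id.prodMk (hcont.mono hsphere))
  rintro _ ⟨ζ, hζ, rfl⟩
  refine ⟨‖ζ‖⁻¹ ^ k, by positivity, fun d P hP => ?_⟩
  obtain ⟨G, hG, hGf⟩ := exists_differentiableOn_eqOn_pow_mul_eval hg hgφ hP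
  have hsup : ∀ z ∈ sphere (0 : ℂ) 1, ‖z ^ (k * d) * eval ![z, φ z] P‖ ≤
      sSup ((fun y : ℂ × ℂ => ‖eval ![y.1, y.2] P‖) '' ((fun ζ => (ζ, φ ζ)) '' sphere 0 1)) := by
    intro z hz
    rw [norm_mul, norm_pow, mem_sphere_zero_iff_norm.mp hz, one_pow, one_mul]
    exact norm_eval_le_sSup_of_isCompact hγ P (y := (z, φ z)) (mem_image_of_mem _ hz)
  have hζP := norm_le_of_forall_mem_sphere_norm_le_of_eqOn one_pos (by fun_prop) hG hGf hsup hζ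
  rw [norm_mul, norm_pow, ← le_inv_mul_iff₀ (pow_pos (norm_pos_iff.mpr hζ.2) _), ← inv_pow,
    pow_mul] at hζP
  exact hζP

/-- Proposition 3: if φ is holomorphic on the punctured open disk, continuous on the
punctured closed disk, with a pole or removable singularity at 0, then its graph Σ over the
punctured closed disk is contained in the projective hull of its graph γ over the circle. -/
theorem graph_subset_projectiveHull
    (φ : ℂ → ℂ)
    (hcont : ContinuousOn φ (Metric.closedBall (0 : ℂ) 1 \ {0}))
    (hdiff : DifferentiableOn ℂ φ (Metric.ball (0 : ℂ) 1 \ {0}))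
    (hpole : ∃ (k : ℕ) (g : ℂ → ℂ), DifferentiableOn ℂ g (Metric.ball (0 : ℂ) 1) ∧
      ∀ z ∈ Metric.ball (0 : ℂ) 1 \ {0}, g z = z ^ k * φ z) :
    (fun ζ => (ζ, φ ζ)) '' (Metric.closedBall (0 : ℂ) 1 \ {0}) ⊆
      projectiveHull ((fun ζ => (ζ, φ ζ)) '' Metric.sphere (0 : ℂ) 1) :=
  graph_subset_projectiveHull_general φ hcont hpole
end

section
/- Let φ : ℂ → ℂ be holomorphic on the punctured open unit disk {z : 0 < |z| < 1}, continuous on Δ \ {0}, and suppose that for some k ∈ ℕ the function z ↦ z^k·φ(z) extends to a bounded holomorphic function on the open unit disk (so φ has a pole of order at most k, or a removable singularity, at 0). Let d ∈ ℕ and let P be a polynomial in two complex variables of total degree at most d with sup_{|ζ|=1} |P(ζ, φ(ζ))| ≤ 1. Then for every ζ₀ with 0 < |ζ₀| < 1, one has |P(ζ₀, φ(ζ₀))| ≤ (1/(1 − |ζ₀|)) · (1/|ζ₀|^k)^d. -/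
/-!
Multiplying by `z ^ (k * d)` clears the pole: as `P` has degree at most `d` in its second
variable, `z ^ (k * d) * P(z, φ z)` is a polynomial in `z` and `g z = z ^ k * φ z`, hence
holomorphic on the open disk, and it is continuous up to the circle, where it is bounded by `1`.
The maximum modulus principle gives `‖ζ₀‖ ^ (k * d) * ‖P(ζ₀, φ ζ₀)‖ ≤ 1`, which is stronger
than the claim.
-/

open MvPolynomial Metric Set Filter

theorem MvPolynomial.exists_pow_mul_eval_eq_eval_pow_mul {R : Type*} [CommSemiring R]
    (P : MvPolynomial (Fin 2) R) {d : ℕ} (hP : P.degreeOf 1 ≤ d) (k : ℕ) :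
    ∃ Q : MvPolynomial (Fin 2) R, ∀ z w : R,
      z ^ (k * d) * eval ![z, w] P = eval ![z, z ^ k * w] Q := by
  refine ⟨∑ s ∈ P.support, C (P.coeff s) * X 0 ^ (s 0 + k * (d - s 1)) * X 1 ^ s 1,
    fun z w => ?_⟩
  simp only [eval_eq' _ P, Fin.prod_univ_two, Finset.mul_sum, map_sum, map_mul, map_pow, eval_C,
    eval_X, Matrix.cons_val_zero, Matrix.cons_val_one]
  refine Finset.sum_congr rfl fun s hs => ?_
  have hkd : k * d = k * (d - s 1) + k * s 1 := by
    rw [← Nat.mul_add, Nat.sub_add_cancel ((monomial_le_degreeOf 1 hs).trans hP)]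
  rw [hkd]
  ring

theorem norm_le_of_differentiableOn_of_eqOn_punctured {E : Type*} [NormedAddCommGroup E]
    [NormedSpace ℂ E] {F G : ℂ → E} {U : Set ℂ} {c : ℂ} {M : ℝ}
    (hUb : Bornology.IsBounded U) (hUo : IsOpen U) (hc : c ∈ U)
    (hF : DifferentiableOn ℂ F U) (hG : ContinuousOn G (closure U \ {c}))
    (hFG : EqOn F G (U \ {c})) (hM : ∀ z ∈ frontier U, ‖G z‖ ≤ M) {z : ℂ} (hz : z ∈ U) :
    ‖F z‖ ≤ M := by
  classical
  set H := Function.update G c (F c)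
  have hHF : EqOn H F U := by
    intro w hw
    rcases eq_or_ne w c with rfl | hwc
    · simp [H]
    · simp [H, Function.update_of_ne hwc, hFG ⟨hw, hwc⟩]
  have hH : DiffContOnCl ℂ H U := by
    refine ⟨hF.congr hHF, fun w hw => ?_⟩
    rcases eq_or_ne w c with rfl | hwc
    · have hFc : ContinuousAt F w := (hF w hc).differentiableAt (hUo.mem_nhds hc) |>.continuousAt
      exact (hFc.congr (eventuallyEq_of_mem (hUo.mem_nhds hc) hHF).symm).continuousWithinAt
    · rw [continuousWithinAt_update_of_ne hwc, ← continuousWithinAt_sdiff_singleton (y := c)]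
      exact hG w ⟨hw, hwc⟩
  have hcF : c ∉ frontier U := fun h => h.2 (hUo.interior_eq.symm ▸ hc)
  calc ‖F z‖ = ‖H z‖ := by rw [hHF hz]
    _ ≤ M :=
      Complex.norm_le_of_forall_mem_frontier_norm_le hUb hH (fun w hw => ?_) (subset_closure hz)
  rw [show H w = G w from Function.update_of_ne (ne_of_mem_of_not_mem hw hcF) _ _]
  exact hM w hw

theorem projective_hull_estimate_general
    (φ : ℂ → ℂ) (k : ℕ) (g : ℂ → ℂ)
    (hcont : ContinuousOn φ (Metric.closedBall (0 : ℂ) 1 \ {0}))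
    (hg : DifferentiableOn ℂ g (Metric.ball (0 : ℂ) 1))
    (hgeq : ∀ z ∈ Metric.ball (0 : ℂ) 1 \ {0}, g z = z ^ k * φ z)
    (d : ℕ) (P : MvPolynomial (Fin 2) ℂ) (hPdeg : P.totalDegree ≤ d)
    (hPbound : ∀ ζ ∈ Metric.sphere (0 : ℂ) 1,
      ‖MvPolynomial.eval ![ζ, φ ζ] P‖ ≤ 1) :
    ∀ ζ₀ : ℂ, 0 < ‖ζ₀‖ → ‖ζ₀‖ < 1 →
      ‖MvPolynomial.eval ![ζ₀, φ ζ₀] P‖ ≤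
        (1 / (1 - ‖ζ₀‖)) * (1 / ‖ζ₀‖ ^ k) ^ d := by
  intro ζ₀ hζ₀ hζ₁
  obtain ⟨Q, hQ⟩ :=
    P.exists_pow_mul_eval_eq_eval_pow_mul ((degreeOf_le_totalDegree P 1).trans hPdeg) k
  have hF : DifferentiableOn ℂ (fun z => eval ![z, g z] Q) (ball 0 1) :=
    (AnalyticOnNhd.eval_mvPolynomial Q).differentiableOn.comp
      (differentiableOn_pi.2 (Fin.forall_fin_two.2 ⟨differentiableOn_id, hg⟩)) (mapsTo_univ _ _)
  have hG : ContinuousOn (fun z => z ^ (k * d) * eval ![z, φ z] P) (closure (ball 0 1) \ {0}) := by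
    rw [closure_ball 0 one_ne_zero]
    exact (continuousOn_pow _).mul ((continuous_eval P).comp_continuousOn
      (continuousOn_pi.2 (Fin.forall_fin_two.2 ⟨continuousOn_id, hcont⟩)))
  have hFG : EqOn (fun z => eval ![z, g z] Q) (fun z => z ^ (k * d) * eval ![z, φ z] P)
      (ball 0 1 \ {0}) := fun z hz => by simp only [hQ, hgeq z hz]
  have hsphere : ∀ z ∈ frontier (ball (0 : ℂ) 1), ‖z ^ (k * d) * eval ![z, φ z] P‖ ≤ 1 := by
    intro z hz
    rw [frontier_ball 0 one_ne_zero] at hz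
    simpa [mem_sphere_zero_iff_norm.1 hz] using hPbound z hz
  have hζ₀mem : ζ₀ ∈ ball (0 : ℂ) 1 \ {0} := ⟨mem_ball_zero_iff.2 hζ₁, norm_pos_iff.1 hζ₀⟩
  have hmain : ‖ζ₀‖ ^ (k * d) * ‖eval ![ζ₀, φ ζ₀] P‖ ≤ 1 := by
    simpa [hFG hζ₀mem] using norm_le_of_differentiableOn_of_eqOn_punctured isBounded_ball
      isOpen_ball (mem_ball_self one_pos) hF hG hFG hsphere hζ₀mem.1
  calc ‖eval ![ζ₀, φ ζ₀] P‖ ≤ (1 / ‖ζ₀‖ ^ k) ^ d := by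
        rw [div_pow, one_pow, ← pow_mul, le_div_iff₀ (by positivity), mul_comm]
        exact hmain
    _ ≤ (1 / (1 - ‖ζ₀‖)) * (1 / ‖ζ₀‖ ^ k) ^ d :=
        le_mul_of_one_le_left (by positivity) (one_le_one_div (by linarith) (by linarith))

/-- The quantitative estimate in Proposition 3: if φ is holomorphic on the punctured open
disk, continuous on the punctured closed disk, and z^k φ(z) extends to a bounded holomorphic
function on the open disk, then for any polynomial P of total degree ≤ d bounded by 1 on the
graph over the circle, |P(ζ₀, φ(ζ₀))| ≤ (1/(1-|ζ₀|)) · (1/|ζ₀|^k)^d for 0 < |ζ₀| < 1. -/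
theorem projective_hull_estimate
    (φ : ℂ → ℂ) (k : ℕ) (g : ℂ → ℂ)
    (hdiff : DifferentiableOn ℂ φ (Metric.ball (0 : ℂ) 1 \ {0}))
    (hcont : ContinuousOn φ (Metric.closedBall (0 : ℂ) 1 \ {0}))
    (hg : DifferentiableOn ℂ g (Metric.ball (0 : ℂ) 1))
    (hgbdd : ∃ B : ℝ, ∀ z ∈ Metric.ball (0 : ℂ) 1, ‖g z‖ ≤ B)
    (hgeq : ∀ z ∈ Metric.ball (0 : ℂ) 1 \ {0}, g z = z ^ k * φ z)
    (d : ℕ) (P : MvPolynomial (Fin 2) ℂ) (hPdeg : P.totalDegree ≤ d)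
    (hPbound : ∀ ζ ∈ Metric.sphere (0 : ℂ) 1,
      ‖MvPolynomial.eval ![ζ, φ ζ] P‖ ≤ 1) :
    ∀ ζ₀ : ℂ, 0 < ‖ζ₀‖ → ‖ζ₀‖ < 1 →
      ‖MvPolynomial.eval ![ζ₀, φ ζ₀] P‖ ≤
        (1 / (1 - ‖ζ₀‖)) * (1 / ‖ζ₀‖ ^ k) ^ d :=
  projective_hull_estimate_general φ k g hcont hg hgeq d P hPdeg hPbound
end

section
/- Let a : ℕ × ℕ → ℂ be such that the double series Φ(z, w) = Σ_{n,m≥0} a_{nm} zⁿ wᵐ is absolutely summable for every (z, w) ∈ ℂ². Define φ(ζ) = Σ_{n,m≥0} a_{nm} ζⁿ (ζ̄)ᵐ for ζ ∈ ℂ, and set γ = {(ζ, φ(ζ)) : |ζ| = 1} and Σ = {(ζ, φ(ζ)) : |ζ| ≤ 1} in ℂ². If Σ is contained in the projective hull of γ, then φ is holomorphic (complex differentiable) on the open unit disk {ζ : |ζ| < 1}; in particular the apparent singularity at ζ = 0 is removable. -/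
/-!
On the unit circle `ζ̄ = ζ⁻¹`, so `γ` is also the graph of the Laurent series
`Ψ(ζ) = Φ(ζ, ζ⁻¹)`, which is holomorphic on `ℂ \ {0}`. Let `Ψ_N` be its truncation to
`n, m < N`. The polynomial `Q_N(z, w) = z^N (w - Ψ_N(z))` has degree at most `2N + 1`, and since
`Φ` converges absolutely on all of `ℂ²`, `|Q_N| ≤ B_R R^{-N}` on `γ` for every `R ≥ 1`.
At a point `(ζ, φ(ζ))` of the hull with `ζ ≠ 0` this gives
`|φ(ζ) - Ψ_N(ζ)| ≤ C B_R (C² / (|ζ| R))^N`, so `φ(ζ) = Ψ(ζ)` once `R` is large.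
Hence `φ` is holomorphic on the punctured disk and, being continuous at `0`, on the whole disk.
-/

open Filter Topology Metric MvPolynomial Finset

lemma norm_eval_le_of_mem_projectiveHull {K : Set (ℂ × ℂ)} {x : ℂ × ℂ}
    (hx : x ∈ projectiveHull K) :
    ∃ C : ℝ, 0 ≤ C ∧ ∀ (d : ℕ) (P : MvPolynomial (Fin 2) ℂ) (M : ℝ), P.totalDegree ≤ d →
      0 ≤ M → (∀ y ∈ K, ‖eval ![y.1, y.2] P‖ ≤ M) → ‖eval ![x.1, x.2] P‖ ≤ C ^ d * M := by
  obtain ⟨C, hC0, hC⟩ := hx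
  refine ⟨C, hC0, fun d P M hP hM hK => (hC d P hP).trans ?_⟩
  gcongr
  exact Real.sSup_le (by rintro _ ⟨y, hy, rfl⟩; exact hK y hy) hM

lemma tendsto_range_product_range_atTop :
    Tendsto (fun N : ℕ => range N ×ˢ range N) atTop atTop :=
  tendsto_atTop_finset_of_monotone
    (fun _ _ h => product_subset_product (range_mono h) (range_mono h))
    fun p => ⟨max p.1 p.2 + 1, by simp only [mem_product, mem_range]; omega⟩

section DoubleSeries

variable {a : ℕ × ℕ → ℂ}

noncomputable def doubleSeries (a : ℕ × ℕ → ℂ) (z w : ℂ) : ℂ :=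
  ∑' p : ℕ × ℕ, a p * z ^ p.1 * w ^ p.2

lemma norm_mul_pow_mul_pow_le (p : ℕ × ℕ) {z w : ℂ} {R S : ℝ} (hz : ‖z‖ ≤ R) (hw : ‖w‖ ≤ S) :
    ‖a p * z ^ p.1 * w ^ p.2‖ ≤ ‖a p * (R : ℂ) ^ p.1 * (S : ℂ) ^ p.2‖ := by
  have hR : 0 ≤ R := (norm_nonneg z).trans hz
  have hS : 0 ≤ S := (norm_nonneg w).trans hw
  simp only [norm_mul, norm_pow, Complex.norm_real, Real.norm_of_nonneg hR,
    Real.norm_of_nonneg hS]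
  gcongr

lemma continuous_doubleSeries
    (hsum : ∀ z w : ℂ, Summable fun p : ℕ × ℕ => ‖a p * z ^ p.1 * w ^ p.2‖) :
    Continuous fun q : ℂ × ℂ => doubleSeries a q.1 q.2 := by
  refine continuous_iff_continuousAt.2 fun q₀ => ?_
  set R : ℝ := ‖q₀‖ + 1
  have hball : ContinuousOn (fun q : ℂ × ℂ => doubleSeries a q.1 q.2) (ball 0 R) := by
    refine continuousOn_tsum (fun p => by fun_prop) (hsum R R) fun p q hq => ?_
    have hq' : ‖q‖ ≤ R := (mem_ball_zero_iff.1 hq).le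
    exact norm_mul_pow_mul_pow_le p ((norm_fst_le q).trans hq') ((norm_snd_le q).trans hq')
  exact hball.continuousAt (isOpen_ball.mem_nhds (mem_ball_zero_iff.2 (lt_add_one _)))

lemma differentiableOn_doubleSeries_inv
    (hsum : ∀ z w : ℂ, Summable fun p : ℕ × ℕ => ‖a p * z ^ p.1 * w ^ p.2‖) :
    DifferentiableOn ℂ (fun ζ => doubleSeries a ζ ζ⁻¹) {0}ᶜ := by
  intro ζ₀ hζ₀
  have hr : 0 < ‖ζ₀‖ := norm_pos_iff.2 hζ₀
  set U := {ζ : ℂ | ‖ζ₀‖ / 2 < ‖ζ‖ ∧ ‖ζ‖ < ‖ζ₀‖ + 1}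
  have hU : IsOpen U :=
    (isOpen_lt continuous_const continuous_norm).inter (isOpen_lt continuous_norm continuous_const)
  have hinv : ∀ ζ ∈ U, ‖ζ⁻¹‖ ≤ 2 / ‖ζ₀‖ := fun ζ hζ => by
    rw [norm_inv, ← inv_div]
    exact inv_anti₀ (by positivity) hζ.1.le
  have hU0 : U ⊆ {0}ᶜ := fun ζ hζ => norm_pos_iff.1 ((half_pos hr).trans hζ.1)
  have hd : DifferentiableOn ℂ (fun ζ => doubleSeries a ζ ζ⁻¹) U := by
    refine Complex.differentiableOn_tsum_of_summable_norm
      (hsum ((‖ζ₀‖ + 1 : ℝ) : ℂ) ((2 / ‖ζ₀‖ : ℝ) : ℂ)) (fun p => ?_) hU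
      fun p ζ hζ => norm_mul_pow_mul_pow_le p hζ.2.le (hinv ζ hζ)
    exact ((differentiableOn_const _).mul (differentiableOn_pow _)).mul
      ((differentiableOn_inv.mono hU0).pow _)
  exact (hd.differentiableAt (hU.mem_nhds ⟨half_lt_self hr, lt_add_one _⟩)).differentiableWithinAt

lemma norm_doubleSeries_sub_sum_mul_pow_le
    (hsum : ∀ z w : ℂ, Summable fun p : ℕ × ℕ => ‖a p * z ^ p.1 * w ^ p.2‖)
    {z w : ℂ} (hz : ‖z‖ ≤ 1) (hw : ‖w‖ ≤ 1) {R : ℝ} (hR : 1 ≤ R) (N : ℕ) :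
    ‖doubleSeries a z w - ∑ p ∈ range N ×ˢ range N, a p * z ^ p.1 * w ^ p.2‖ * R ^ N ≤
      ∑' p : ℕ × ℕ, ‖a p * (R : ℂ) ^ p.1 * (R : ℂ) ^ p.2‖ := by
  set s := range N ×ˢ range N
  set f := fun p : ℕ × ℕ => a p * z ^ p.1 * w ^ p.2
  set g := fun p : ℕ × ℕ => ‖a p * (R : ℂ) ^ p.1 * (R : ℂ) ^ p.2‖
  have htail : ∀ p ∉ s, ‖f p‖ * R ^ N ≤ g p := by
    intro p hp
    have hN : N ≤ p.1 + p.2 := by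
      simp only [s, mem_product, mem_range, not_and_or, not_lt] at hp
      omega
    have hf : ‖f p‖ ≤ ‖a p‖ := by simpa [f] using norm_mul_pow_mul_pow_le (a := a) p hz hw
    calc ‖f p‖ * R ^ N ≤ ‖a p‖ * R ^ (p.1 + p.2) := by
          gcongr
      _ = g p := by
          simp [g, pow_add, abs_of_nonneg (zero_le_one.trans hR), mul_assoc]
  have hf := hsum z w
  rw [doubleSeries, ← hf.of_norm.sum_add_tsum_subtype_compl s, add_sub_cancel_left]
  calc ‖∑' p : {p // p ∉ s}, f p‖ * R ^ N ≤ (∑' p : {p // p ∉ s}, ‖f p‖) * R ^ N := by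
        gcongr
        exact norm_tsum_le_tsum_norm (hf.subtype _)
    _ = ∑' p : {p // p ∉ s}, ‖f p‖ * R ^ N := tsum_mul_right.symm
    _ ≤ ∑' p : {p // p ∉ s}, g p :=
        ((hf.subtype _).mul_right _).tsum_le_tsum (fun p => htail p p.2) ((hsum R R).subtype _)
    _ ≤ ∑' p, g p := (hsum R R).tsum_subtype_le g _ fun _ => norm_nonneg _

/-- `z ^ N * (w - ∑_{n, m < N} a_{nm} z ^ (n - m))`, a polynomial because `m < N`. -/
noncomputable def defectPolynomial (a : ℕ × ℕ → ℂ) (N : ℕ) : MvPolynomial (Fin 2) ℂ :=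
  X 1 * X 0 ^ N - ∑ p ∈ range N ×ˢ range N, C (a p) * X 0 ^ (N + p.1 - p.2)

lemma totalDegree_defectPolynomial_le (a : ℕ × ℕ → ℂ) (N : ℕ) :
    (defectPolynomial a N).totalDegree ≤ 2 * N + 1 := by
  refine (totalDegree_sub _ _).trans (max_le ?_ ?_)
  · refine (totalDegree_mul _ _).trans ?_
    have := totalDegree_pow (X 0 : MvPolynomial (Fin 2) ℂ) N
    rw [totalDegree_X] at this ⊢
    omega
  · refine (totalDegree_finsetSum _ _).trans (Finset.sup_le fun p hp => ?_)
    refine (totalDegree_mul _ _).trans ?_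
    have := totalDegree_pow (X 0 : MvPolynomial (Fin 2) ℂ) (N + p.1 - p.2)
    rw [totalDegree_X] at this
    rw [totalDegree_C]
    simp only [mem_product, mem_range] at hp
    omega

lemma eval_defectPolynomial (a : ℕ × ℕ → ℂ) (N : ℕ) {z : ℂ} (hz : z ≠ 0) (w : ℂ) :
    eval ![z, w] (defectPolynomial a N) =
      z ^ N * (w - ∑ p ∈ range N ×ˢ range N, a p * z ^ p.1 * z⁻¹ ^ p.2) := by
  simp only [defectPolynomial, map_sub, map_mul, map_pow, map_sum, eval_X, eval_C,
    Matrix.cons_val_zero, Matrix.cons_val_one, mul_sub, mul_sum]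
  congr 1
  · ring
  refine sum_congr rfl fun p hp => ?_
  simp only [mem_product, mem_range] at hp
  rw [pow_sub₀ z hz (by omega), inv_pow, pow_add]
  ring

lemma eq_doubleSeries_inv_of_mem_projectiveHull
    (hsum : ∀ z w : ℂ, Summable fun p : ℕ × ℕ => ‖a p * z ^ p.1 * w ^ p.2‖) {f : ℂ → ℂ}
    (hf : ∀ z : ℂ, ‖z‖ = 1 → f z = doubleSeries a z z⁻¹) {ζ : ℂ} (hζ : ζ ≠ 0)
    (hhull : (ζ, f ζ) ∈ projectiveHull ((fun z => (z, f z)) '' sphere 0 1)) :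
    f ζ = doubleSeries a ζ ζ⁻¹ := by
  obtain ⟨C, hC0, hC⟩ := norm_eval_le_of_mem_projectiveHull hhull
  have hr : 0 < ‖ζ‖ := norm_pos_iff.2 hζ
  set u : ℕ → ℂ := fun N => ∑ p ∈ range N ×ˢ range N, a p * ζ ^ p.1 * ζ⁻¹ ^ p.2
  -- any `R ≥ 1` with `C ^ 2 < ‖ζ‖ * R` works
  set R : ℝ := (C ^ 2 + 1) / ‖ζ‖ + 1
  have hR : 1 ≤ R := le_add_of_nonneg_left (by positivity)
  have hζR : ‖ζ‖ * R = C ^ 2 + 1 + ‖ζ‖ := by simp only [R]; field_simp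
  set B : ℝ := ∑' p : ℕ × ℕ, ‖a p * (R : ℂ) ^ p.1 * (R : ℂ) ^ p.2‖
  set q : ℝ := C ^ 2 / (‖ζ‖ * R)
  have hq : q < 1 := by
    rw [div_lt_one (by positivity), hζR]
    linarith
  have hbound : ∀ N, ‖f ζ - u N‖ ≤ C * B * q ^ N := by
    intro N
    have hγ : ∀ y ∈ (fun z => (z, f z)) '' sphere 0 1,
        ‖eval ![y.1, y.2] (defectPolynomial a N)‖ ≤ B / R ^ N := by
      rintro _ ⟨z, hz, rfl⟩
      dsimp only
      have hz1 : ‖z‖ = 1 := by simpa using hz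
      have hz0 : z ≠ 0 := norm_ne_zero_iff.1 (by rw [hz1]; exact one_ne_zero)
      rw [eval_defectPolynomial a N hz0, norm_mul, norm_pow, hz1, one_pow, one_mul, hf z hz1,
        le_div_iff₀ (by positivity)]
      exact norm_doubleSeries_sub_sum_mul_pow_le hsum hz1.le (by simp [hz1]) hR N
    have h := hC (2 * N + 1) _ _ (totalDegree_defectPolynomial_le a N) (by positivity) hγ
    rw [eval_defectPolynomial a N hζ, norm_mul, norm_pow] at h
    calc ‖f ζ - u N‖ = ‖ζ‖ ^ N * ‖f ζ - u N‖ / ‖ζ‖ ^ N := by field_simp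
      _ ≤ C ^ (2 * N + 1) * (B / R ^ N) / ‖ζ‖ ^ N := by gcongr
      _ = C * B * q ^ N := by simp only [q, div_pow, mul_pow]; field_simp; ring
  have hu : Tendsto u atTop (𝓝 (f ζ)) := by
    refine tendsto_iff_norm_sub_tendsto_zero.2 (squeeze_zero (fun _ => norm_nonneg _)
      (fun N => (norm_sub_rev _ _).trans_le (hbound N)) ?_)
    simpa using (tendsto_pow_atTop_nhds_zero_of_lt_one (by positivity) hq).const_mul (C * B)
  exact tendsto_nhds_unique hu
    ((hsum ζ ζ⁻¹).of_norm.hasSum.comp tendsto_range_product_range_atTop)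

end DoubleSeries

/-- Theorem 5: if φ(ζ) = Σ a_{nm} ζⁿ ζ̄ᵐ (the series converging absolutely everywhere) and
the graph Σ of φ over the closed disk lies in the projective hull of its graph γ over the
circle, then φ is holomorphic on the open unit disk. -/
theorem wermer_theorem_five
    (a : ℕ × ℕ → ℂ)
    (hsum : ∀ z w : ℂ, Summable fun p : ℕ × ℕ => ‖a p * z ^ p.1 * w ^ p.2‖)
    (φ : ℂ → ℂ)
    (hφ : φ = fun ζ => ∑' p : ℕ × ℕ, a p * ζ ^ p.1 * (starRingEnd ℂ ζ) ^ p.2)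
    (hhull : (fun ζ => (ζ, φ ζ)) '' Metric.closedBall (0 : ℂ) 1 ⊆
      projectiveHull ((fun ζ => (ζ, φ ζ)) '' Metric.sphere (0 : ℂ) 1)) :
    DifferentiableOn ℂ φ (Metric.ball (0 : ℂ) 1) := by
  have hφ' : φ = fun ζ => doubleSeries a ζ (starRingEnd ℂ ζ) := hφ
  have hcircle : ∀ z : ℂ, ‖z‖ = 1 → φ z = doubleSeries a z z⁻¹ := fun z hz => by
    rw [hφ', RCLike.inv_eq_conj hz]
  have hpunctured : Set.EqOn φ (fun ζ => doubleSeries a ζ ζ⁻¹) (ball 0 1 \ {0}) := fun ζ hζ =>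
    eq_doubleSeries_inv_of_mem_projectiveHull hsum hcircle hζ.2
      (hhull ⟨ζ, ball_subset_closedBall hζ.1, rfl⟩)
  have hcont : ContinuousAt φ 0 := by
    rw [hφ']
    exact ((continuous_doubleSeries hsum).comp
      (continuous_id.prodMk Complex.continuous_conj)).continuousAt
  refine (Complex.differentiableOn_compl_singleton_and_continuousAt_iff
    (ball_mem_nhds 0 one_pos)).1 ⟨?_, hcont⟩
  exact ((differentiableOn_doubleSeries_inv hsum).mono fun ζ hζ => hζ.2).congr hpunctured
end

section
/- Let a : ℕ × ℕ → ℂ and let R > 4 and C ≥ 0 be constants with |a_{nm}| ≤ C / R^{n+m} for all n, m ∈ ℕ, so that the double series Σ_{n,m≥0} a_{nm} zⁿ wᵐ is absolutely summable for all |z|, |w| ≤ 2. Define φ(ζ) = Σ_{n,m≥0} a_{nm} ζⁿ (ζ̄)ᵐ, and for d ∈ ℕ define the polynomial P_d(ζ, w) = ζ^d · w − Σ_{n+m ≤ d} a_{nm} ζ^{n + d − m} (a polynomial of total degree at most 2d). Then for every ζ with |ζ| = 1, one has P_d(ζ, φ(ζ)) = ζ^d · Σ_{n+m > d} a_{nm}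 ζⁿ (ζ̄)ᵐ, and consequently sup_{|ζ|=1} |P_d(ζ, φ(ζ))| ≤ C · (2/R)^d · (4 + 2d). -/
/-! On the unit circle `ζ̄ = ζ⁻¹`, so `ζ^d aₙₘ ζⁿ ζ̄ᵐ = aₙₘ ζ^(n+d-m)`, and `P_d(ζ, φ(ζ))` is
`ζ^d` times the tail `n + m > d` of the absolutely convergent series for `φ(ζ)`. For `n + m ≥ d`
and `R ≥ 2` one has `C / R^(n+m) ≤ C (2/R)^d 2^(-n) 2^(-m)`, and the double geometric series
`Σ 2^(-n) 2^(-m)` equals `4`. -/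

open Finset

lemma hasSum_half_pow_mul_half_pow :
    HasSum (fun p : ℕ × ℕ => (1 / 2 : ℝ) ^ p.1 * (1 / 2) ^ p.2) 4 := by
  have h := hasSum_geometric_two.mul hasSum_geometric_two <|
    summable_geometric_two.mul_of_nonneg summable_geometric_two
      (fun _ => by positivity) (fun _ => by positivity)
  norm_num at h
  exact h

lemma norm_tsum_subtype_le_of_hasSum {ι E : Type*} [SeminormedAddCommGroup E] {f : ι → E}
    {g : ι → ℝ} {b : ℝ} (s : Set ι) (hg : HasSum g b) (hg0 : ∀ i, 0 ≤ g i)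
    (hfg : ∀ i ∈ s, ‖f i‖ ≤ g i) : ‖∑' i : s, f i‖ ≤ b :=
  (tsum_of_norm_bounded (hg.summable.subtype s).hasSum fun i => hfg i.1 i.2).trans
    (hg.tsum_eq ▸ hg.summable.tsum_subtype_le g s hg0)

lemma div_pow_add_le_mul_half_pow {R C : ℝ} (hR : 2 ≤ R) (hC : 0 ≤ C) {d n m : ℕ}
    (h : d ≤ n + m) :
    C / R ^ (n + m) ≤ C * (2 / R) ^ d * ((1 / 2) ^ n * (1 / 2) ^ m) := by
  have hR0 : 0 < R := by linarith
  have h2R : 2 / R ≤ 1 := (div_le_one hR0).2 hR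
  calc C / R ^ (n + m) = C * (2 / R) ^ (n + m) * ((1 / 2) ^ n * (1 / 2) ^ m) := by
        rw [← pow_add, div_pow, div_pow, one_pow]
        field_simp
    _ ≤ C * (2 / R) ^ d * ((1 / 2) ^ n * (1 / 2) ^ m) := by
        gcongr C * ?_ * _
        exact pow_le_pow_of_le_one (by positivity) h2R h

lemma pow_mul_mul_conj_pow_of_norm_eq_one {ζ : ℂ} (hζ : ‖ζ‖ = 1) (c : ℂ) {d n m : ℕ}
    (h : m ≤ n + d) :
    ζ ^ d * (c * ζ ^ n * starRingEnd ℂ ζ ^ m) = c * ζ ^ (n + d - m) := by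
  have hζ0 : ζ ≠ 0 := norm_ne_zero_iff.1 (hζ ▸ one_ne_zero)
  rw [← Complex.inv_eq_conj hζ, inv_pow, pow_sub₀ ζ hζ0 h, pow_add]
  ring

lemma norm_mul_pow_mul_conj_pow_of_norm_eq_one {ζ : ℂ} (hζ : ‖ζ‖ = 1) (c : ℂ) (n m : ℕ) :
    ‖c * ζ ^ n * starRingEnd ℂ ζ ^ m‖ = ‖c‖ := by
  simp [hζ]

def lowDegreePairs (d : ℕ) : Finset (ℕ × ℕ) :=
  (range (d + 1) ×ˢ range (d + 1)).filter (fun p => p.1 + p.2 ≤ d)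

lemma coe_lowDegreePairs_compl (d : ℕ) :
    (↑(lowDegreePairs d) : Set (ℕ × ℕ))ᶜ = {p | d < p.1 + p.2} := by
  ext ⟨n, m⟩
  simp only [lowDegreePairs, Set.mem_compl_iff, coe_filter, mem_product, mem_range,
    Set.mem_ofPred_eq]
  omega

lemma pow_mul_tsum_sub_sum_lowDegreePairs {a : ℕ × ℕ → ℂ} {ζ : ℂ} (hζ : ‖ζ‖ = 1)
    (hs : Summable fun p : ℕ × ℕ => a p * ζ ^ p.1 * starRingEnd ℂ ζ ^ p.2) (d : ℕ) :
    ζ ^ d * ∑' p : ℕ × ℕ, a p * ζ ^ p.1 * starRingEnd ℂ ζ ^ p.2 -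
        ∑ p ∈ lowDegreePairs d, a p * ζ ^ (p.1 + d - p.2) =
      ζ ^ d * ∑' p : {p : ℕ × ℕ // d < p.1 + p.2},
        a p.1 * ζ ^ p.1.1 * starRingEnd ℂ ζ ^ p.1.2 := by
  have hlow : ∑ p ∈ lowDegreePairs d, a p * ζ ^ (p.1 + d - p.2) =
      ∑ p ∈ lowDegreePairs d, ζ ^ d * (a p * ζ ^ p.1 * starRingEnd ℂ ζ ^ p.2) := by
    refine sum_congr rfl fun p hp => ?_
    simp only [lowDegreePairs, mem_filter] at hp
    exact (pow_mul_mul_conj_pow_of_norm_eq_one hζ _ (by omega)).symm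
  have hsplit := (hs.mul_left (ζ ^ d)).sum_add_tsum_compl (s := lowDegreePairs d)
  rw [coe_lowDegreePairs_compl, tsum_mul_left, tsum_mul_left] at hsplit
  rw [hlow, ← hsplit]
  exact add_sub_cancel_left _ _

/-- Equation (18): with |a_{nm}| ≤ C / R^{n+m} (R > 4), φ(ζ) = Σ a_{nm} ζⁿ ζ̄ᵐ, and the
polynomial P_d(ζ,w) = ζ^d w − Σ_{n+m≤d} a_{nm} ζ^{n+d−m}, one has on the unit circle
P_d(ζ, φ(ζ)) = ζ^d Σ_{n+m>d} a_{nm} ζⁿ ζ̄ᵐ, hence |P_d(ζ, φ(ζ))| ≤ C (2/R)^d (4 + 2d). -/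
theorem Pd_on_circle
    (a : ℕ × ℕ → ℂ) (R C : ℝ) (hR : 4 < R) (hC : 0 ≤ C)
    (ha : ∀ n m : ℕ, ‖a (n, m)‖ ≤ C / R ^ (n + m))
    (φ : ℂ → ℂ)
    (hφ : φ = fun ζ => ∑' p : ℕ × ℕ, a p * ζ ^ p.1 * (starRingEnd ℂ ζ) ^ p.2)
    (d : ℕ) (Pd : ℂ → ℂ → ℂ)
    (hPd : Pd = fun ζ w => ζ ^ d * w -
      ∑ p ∈ (Finset.range (d + 1) ×ˢ Finset.range (d + 1)).filter
          (fun p => p.1 + p.2 ≤ d),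
        a p * ζ ^ (p.1 + d - p.2)) :
    (∀ ζ ∈ Metric.sphere (0 : ℂ) 1,
      Pd ζ (φ ζ) = ζ ^ d * ∑' p : {p : ℕ × ℕ // d < p.1 + p.2},
        a p.1 * ζ ^ p.1.1 * (starRingEnd ℂ ζ) ^ p.1.2) ∧
    (∀ ζ ∈ Metric.sphere (0 : ℂ) 1,
      ‖Pd ζ (φ ζ)‖ ≤ C * (2 / R) ^ d * (4 + 2 * d)) := by
  have hR2 : 2 ≤ R := by linarith
  have hweight := hasSum_half_pow_mul_half_pow
  have hbound : ∀ {k : ℕ} {p : ℕ × ℕ}, k ≤ p.1 + p.2 →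
      ‖a p‖ ≤ C * (2 / R) ^ k * ((1 / 2) ^ p.1 * (1 / 2) ^ p.2) := fun h =>
    (ha _ _).trans (div_pow_add_le_mul_half_pow hR2 hC h)
  have hid : ∀ ζ ∈ Metric.sphere (0 : ℂ) 1,
      Pd ζ (φ ζ) = ζ ^ d * ∑' p : {p : ℕ × ℕ // d < p.1 + p.2},
        a p.1 * ζ ^ p.1.1 * (starRingEnd ℂ ζ) ^ p.1.2 := by
    intro ζ hζ
    rw [mem_sphere_zero_iff_norm] at hζ
    subst hφ hPd
    refine pow_mul_tsum_sub_sum_lowDegreePairs hζ (.of_norm_bounded (hweight.summable.mul_left C)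
      fun p => ?_) d
    rw [norm_mul_pow_mul_conj_pow_of_norm_eq_one hζ]
    simpa using hbound (Nat.zero_le (p.1 + p.2))
  refine ⟨hid, fun ζ hζ => ?_⟩
  have hζ1 : ‖ζ‖ = 1 := mem_sphere_zero_iff_norm.1 hζ
  rw [hid ζ hζ, norm_mul, norm_pow, hζ1, one_pow, one_mul]
  calc _ ≤ C * (2 / R) ^ d * 4 :=
        norm_tsum_subtype_le_of_hasSum _ (hweight.mul_left _) (fun _ => by positivity)
          fun p (hp : d < p.1 + p.2) => by
            rw [norm_mul_pow_mul_conj_pow_of_norm_eq_one hζ1]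
            exact hbound hp.le
    _ ≤ C * (2 / R) ^ d * (4 + 2 * d) := by gcongr; linarith [(d.cast_nonneg : (0 : ℝ) ≤ d)]
end

section
/- Let a : ℕ × ℕ → ℂ be such that the double series Σ_{n,m≥0} a_{nm} zⁿ wᵐ is absolutely summable for every (z, w) ∈ ℂ², defining an entire function Φ(z, w). If Φ(α, ᾱ) = Φ(α, 1/α) for every α ∈ ℂ with α ≠ 0, then the function φ : ζ ↦ Φ(ζ, ζ̄) is holomorphic (complex differentiable) on ℂ \ {0}. -/
/-!
On `ℂ \ {0}` the hypothesis says that `ζ ↦ Φ(ζ, ζ̄)` coincides with `ζ ↦ Φ(ζ, ζ⁻¹)`. The latter is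
holomorphic there: near any point `z ↦ z` and `z ↦ z⁻¹` are bounded, so the double series of
holomorphic monomials `a_{nm} zⁿ z⁻ᵐ` is dominated by a convergent series of constants
`‖a_{nm}‖ Rⁿ Sᵐ`, and Weierstrass' theorem on uniform limits of holomorphic functions applies.
-/

open Metric Set

section DoubleSeries

variable (a : ℕ × ℕ → ℂ)

theorem differentiableOn_tsum_mul_pow_mul_pow_of_norm_le {U : Set ℂ} (hU : IsOpen U)
    {f g : ℂ → ℂ} (hf : DifferentiableOn ℂ f U) (hg : DifferentiableOn ℂ g U) {R S : ℂ}
    (hfR : ∀ z ∈ U, ‖f z‖ ≤ ‖R‖) (hgS : ∀ z ∈ U, ‖g z‖ ≤ ‖S‖)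
    (hsum : Summable fun p : ℕ × ℕ => ‖a p * R ^ p.1 * S ^ p.2‖) :
    DifferentiableOn ℂ (fun z => ∑' p : ℕ × ℕ, a p * f z ^ p.1 * g z ^ p.2) U := by
  refine Complex.differentiableOn_tsum_of_summable_norm hsum
    (fun p => ((hf.pow p.1).const_mul (a p)).mul (hg.pow p.2)) hU fun p z hz => ?_
  simp only [norm_mul, norm_pow]
  gcongr
  exacts [hfR z hz, hgS z hz]

theorem differentiableOn_tsum_mul_pow_mul_pow {U : Set ℂ} (hU : IsOpen U)
    (hsum : ∀ z w : ℂ, Summable fun p : ℕ × ℕ => ‖a p * z ^ p.1 * w ^ p.2‖)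
    {f g : ℂ → ℂ} (hf : DifferentiableOn ℂ f U) (hg : DifferentiableOn ℂ g U) :
    DifferentiableOn ℂ (fun z => ∑' p : ℕ × ℕ, a p * f z ^ p.1 * g z ^ p.2) U := by
  refine differentiableOn_of_locally_differentiableOn fun x hx => ?_
  set V := (U ∩ f ⁻¹' ball (f x) 1) ∩ (U ∩ g ⁻¹' ball (g x) 1)
  have hV : IsOpen V :=
    (hf.continuousOn.isOpen_inter_preimage hU isOpen_ball).inter
      (hg.continuousOn.isOpen_inter_preimage hU isOpen_ball)
  have norm_le_of_mem_ball {h : ℂ → ℂ} {z : ℂ} (hz : h z ∈ ball (h x) 1) :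
      ‖h z‖ ≤ ‖((‖h x‖ + 1 : ℝ) : ℂ)‖ := by
    rw [Complex.norm_of_nonneg (by positivity)]
    have := norm_le_norm_add_norm_sub' (h z) (h x)
    rw [mem_ball_iff_norm] at hz
    linarith
  refine ⟨V, hV, ⟨⟨hx, mem_ball_self one_pos⟩, hx, mem_ball_self one_pos⟩,
    differentiableOn_tsum_mul_pow_mul_pow_of_norm_le a (hU.inter hV)
      (hf.mono inter_subset_left) (hg.mono inter_subset_left)
      (fun z hz => norm_le_of_mem_ball hz.2.1.2) (fun z hz => norm_le_of_mem_ball hz.2.2.2)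
      (hsum _ _)⟩

end DoubleSeries

/-- If Φ(z,w) = Σ a_{nm} zⁿ wᵐ is entire and Φ(α, ᾱ) = Φ(α, 1/α) for all α ≠ 0,
then ζ ↦ Φ(ζ, ζ̄) is holomorphic on ℂ \ {0}. -/
theorem graph_holomorphic_off_zero
    (a : ℕ × ℕ → ℂ)
    (hsum : ∀ z w : ℂ, Summable fun p : ℕ × ℕ => ‖a p * z ^ p.1 * w ^ p.2‖)
    (Φ : ℂ → ℂ → ℂ)
    (hΦ : Φ = fun z w => ∑' p : ℕ × ℕ, a p * z ^ p.1 * w ^ p.2)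
    (heq : ∀ α : ℂ, α ≠ 0 → Φ α (starRingEnd ℂ α) = Φ α α⁻¹) :
    ∀ ζ : ℂ, ζ ≠ 0 → DifferentiableAt ℂ (fun z => Φ z (starRingEnd ℂ z)) ζ := by
  intro ζ hζ
  have hopen : IsOpen ({0}ᶜ : Set ℂ) := isOpen_compl_singleton
  have hholo : DifferentiableOn ℂ (fun z => Φ z z⁻¹) {0}ᶜ := by
    subst hΦ
    exact differentiableOn_tsum_mul_pow_mul_pow a hopen hsum differentiableOn_id
      (differentiableOn_inv.mono fun _ => id)
  refine (hholo.differentiableAt (hopen.mem_nhds hζ)).congr_of_eventuallyEq ?_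
  filter_upwards [hopen.mem_nhds hζ] with z hz
  exact heq z hz
end
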